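/- arXiv:1506.04455 — 6 statements merged into one kernel-verified Lean document; each statement's English description precedes it below -/
import Mathlib

section
/- Let p be a nonzero Laurent polynomial in two variables over ℤ and suppose there are integers m and n such that coeff p (i, j) = coeff p (m − i, n − j) for all (i, j) ∈ ℤ × ℤ (i.e. p(x, y) = x^m y^n p(x^{-1}, y^{-1})). Then: (a) the y-breadth of p is congruent to n modulo 2; and (b) if the specialization p(1, y) is nonzero, then the breadth of p(1, y) is congruent to the y-breadth of p modulo 2. (This is the key computational step of Lemma 2.2 of the paper: after normalizing, the y-coefficients a_i(x) of p satisfy a_i(x) = x^m a_{n-i}(x^{-1}), hence a_i(1) = a_{n-i}(1), so br_y(p) ≡ br(p(1,y)) (mod 2).) -/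
/-!
The reflection `(i, j) ↦ (m - i, n - j)` preserves the coefficients of `p`, and it lies over the
reflection `j ↦ n - j` of `y`-exponents. Hence the set of `y`-exponents of `p`, and the support
of `p(1, y)` (whose coefficients are fibre sums over `Prod.snd`), are finite sets of integers
stable under `j ↦ n - j`. For such a set `max + min = n`, so
`max - min = n - 2 min ≡ n (mod 2)`.
-/

/-- The maximum `y`-exponent appearing in a two-variable Laurent polynomial
(junk value `0` for the zero polynomial). -/
noncomputable def ymax (p : AddMonoidAlgebra ℤ (ℤ × ℤ)) : ℤ :=
  ((p.coeff.support.image Prod.snd).max).unbotD 0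

/-- The minimum `y`-exponent appearing in a two-variable Laurent polynomial
(junk value `0` for the zero polynomial). -/
noncomputable def ymin (p : AddMonoidAlgebra ℤ (ℤ × ℤ)) : ℤ :=
  ((p.coeff.support.image Prod.snd).min).untopD 0

/-- The `y`-breadth of a two-variable Laurent polynomial. -/
noncomputable def ybreadth (p : AddMonoidAlgebra ℤ (ℤ × ℤ)) : ℤ := ymax p - ymin p

/-- The breadth of a one-variable Laurent polynomial:
maximum degree minus minimum degree of its support. -/
noncomputable def breadth (q : AddMonoidAlgebra ℤ ℤ) : ℤ :=
  (q.coeff.support.max).unbotD 0 - (q.coeff.support.min).untopD 0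

/-- The specialization `p(1, y)`: the one-variable Laurent polynomial whose coefficient
of `y^j` is `Σ_i coeff p (i, j)`. -/
noncomputable def specOne (p : AddMonoidAlgebra ℤ (ℤ × ℤ)) : AddMonoidAlgebra ℤ ℤ :=
  AddMonoidAlgebra.ofCoeff (Finsupp.mapDomain Prod.snd p.coeff)

theorem Finset.max'_add_min'_of_forall_sub_mem {α : Type*} [AddCommGroup α] [LinearOrder α]
    [IsOrderedAddMonoid α] {s : Finset α} (hs : s.Nonempty) {n : α}
    (h : ∀ j ∈ s, n - j ∈ s) : s.max' hs + s.min' hs = n := by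
  refine le_antisymm ?_ ?_
  · rw [← le_sub_iff_add_le]
    exact s.max'_le hs _ fun j hj => le_sub_comm.mp (s.min'_le _ (h j hj))
  · rw [← sub_le_iff_le_add]
    exact s.le_max' _ (h _ (s.min'_mem hs))

theorem Finset.max_unbotD_sub_min_untopD_modEq_of_forall_sub_mem {s : Finset ℤ}
    (hs : s.Nonempty) {n : ℤ} (h : ∀ j ∈ s, n - j ∈ s) :
    s.max.unbotD 0 - s.min.untopD 0 ≡ n [ZMOD 2] := by
  rw [← Finset.coe_max' hs, ← Finset.coe_min' hs, WithBot.unbotD_coe, WithTop.untopD_coe,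
    ← Finset.max'_add_min'_of_forall_sub_mem hs h]
  exact Int.modEq_iff_dvd.mpr ⟨s.min' hs, by ring⟩

theorem Finsupp.mapDomain_eq_self_of_involutive {α M : Type*} [AddCommMonoid M] {g : α → α}
    (hg : Function.Involutive g) {f : α →₀ M} (hf : ∀ a, f (g a) = f a) :
    Finsupp.mapDomain g f = f := by
  ext a
  conv_lhs => rw [← hg a]
  rw [Finsupp.mapDomain_apply hg.injective, hf]

theorem Finsupp.apply_eq_of_mapDomain_eq_self {α M : Type*} [AddCommMonoid M] {g : α → α}
    (hg : Function.Injective g) {f : α →₀ M} (hf : Finsupp.mapDomain g f = f) (a : α) :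
    f (g a) = f a := by
  conv_lhs => rw [← hf]
  exact Finsupp.mapDomain_apply hg f a

section Symmetric

variable {p : AddMonoidAlgebra ℤ (ℤ × ℤ)} {m n : ℤ}
  (hsym : ∀ i j : ℤ, p.coeff (i, j) = p.coeff (m - i, n - j))
include hsym

theorem sub_mem_image_snd_support_of_symmetric {j : ℤ}
    (hj : j ∈ p.coeff.support.image Prod.snd) : n - j ∈ p.coeff.support.image Prod.snd := by
  obtain ⟨⟨i, j⟩, hij, rfl⟩ := Finset.mem_image.mp hj
  refine Finset.mem_image.mpr ⟨(m - i, n - j), ?_, rfl⟩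
  rwa [Finsupp.mem_support_iff, ← hsym, ← Finsupp.mem_support_iff]

theorem specOne_coeff_sub_of_symmetric (j : ℤ) :
    (specOne p).coeff (n - j) = (specOne p).coeff j := by
  have hrefl : Function.Involutive (fun j : ℤ => n - j) := sub_sub_cancel n
  have hφ : Function.Involutive (fun x : ℤ × ℤ => (m - x.1, n - x.2)) := fun x => by simp
  have hpφ : Finsupp.mapDomain (fun x : ℤ × ℤ => (m - x.1, n - x.2)) p.coeff = p.coeff :=
    Finsupp.mapDomain_eq_self_of_involutive hφ fun x => (hsym x.1 x.2).symm
  refine Finsupp.apply_eq_of_mapDomain_eq_self hrefl.injective ?_ j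
  simp only [specOne, AddMonoidAlgebra.coeff_ofCoeff]
  rw [← Finsupp.mapDomain_comp]
  conv_rhs => rw [← hpφ, ← Finsupp.mapDomain_comp]
  rfl

theorem sub_mem_support_specOne_of_symmetric {j : ℤ} (hj : j ∈ (specOne p).coeff.support) :
    n - j ∈ (specOne p).coeff.support :=
  Finsupp.mem_support_iff.mpr
    ((specOne_coeff_sub_of_symmetric hsym j).trans_ne (Finsupp.mem_support_iff.mp hj))

end Symmetric

/-- If a nonzero two-variable Laurent polynomial `p` over `ℤ` satisfies
`coeff p (i, j) = coeff p (m − i, n − j)` for all `(i, j)` (i.e.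
`p(x, y) = x^m y^n p(x⁻¹, y⁻¹)`), then (a) the `y`-breadth of `p` is congruent to
`n` modulo `2`, and (b) if `p(1, y) ≠ 0`, then the breadth of `p(1, y)` is congruent
to the `y`-breadth of `p` modulo `2`. -/
theorem ybreadth_parity_of_symmetric (p : AddMonoidAlgebra ℤ (ℤ × ℤ)) (hp : p ≠ 0)
    (m n : ℤ) (hsym : ∀ i j : ℤ, p.coeff (i, j) = p.coeff (m - i, n - j)) :
    ybreadth p ≡ n [ZMOD 2] ∧
      (specOne p ≠ 0 → breadth (specOne p) ≡ ybreadth p [ZMOD 2]) := by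
  have hy : ybreadth p ≡ n [ZMOD 2] :=
    Finset.max_unbotD_sub_min_untopD_modEq_of_forall_sub_mem
      ((Finsupp.support_nonempty_iff.mpr (AddMonoidAlgebra.coeff_eq_zero.not.mpr hp)).image _)
      fun j => sub_mem_image_snd_support_of_symmetric hsym
  refine ⟨hy, fun hq => ?_⟩
  have hbr : breadth (specOne p) ≡ n [ZMOD 2] :=
    Finset.max_unbotD_sub_min_untopD_modEq_of_forall_sub_mem
      (Finsupp.support_nonempty_iff.mpr (AddMonoidAlgebra.coeff_eq_zero.not.mpr hq))
      fun j => sub_mem_support_specOne_of_symmetric hsym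
  exact hbr.trans hy.symm
end

section
/- Let s ≥ 4 and b′ be integers and let r_1, …, r_{s−1} be rationals with 0 < r_i < 1 for all i. Assume JN(b′, (r_1, …, r_{s−1})) holds (so in particular −(s−2) ≤ b′ ≤ −1). Then: (1) if −(s−3) ≤ b′ ≤ −2, then JN(b′, (r_1, …, r_{s−1}, r)) holds for every rational 0 < r < 1 and JN(b′−1, (r_1, …, r_{s−1}, r+1)) holds for every rational −1 < r < 0; (2) if b′ = −1, then there is a rational ε > 0 such that JN(b′, (r_1, …, r_{s−1}, r)) holds for every rational 0 < r < ε, and JN(b′−1, (r_1, …, r_{s−1}, r+1)) holds for every rational −1 < r < 0; (3) if b′ = −(s−2), then JN(b′, (r_1, …, r_{s−1}, r)) holds for every rational 0 < r < 1, and there is a rational ε > 0 such that JN(b′−1, (r_1, …, r_{s−1}, r+1)) holds for every rational −ε < r < 0. (This is Lemma 5.5 (rc_integer) of the paper: if S²(b′; r_1, …, r_{s−1}) is not an L-space, then S²(b′; r_1, …, r_{s−1}, r) is not an L-space for the stated ranges of r in (−1, 1).) -/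
/-!
Clause (1) of `JN` only gets weaker when a fiber is added. At `b' = -1`, a new fiber smaller
than every `r_i` and than `1/k` becomes `r_{(1)}`, and clause (2) survives with the same `a, k`;
dually, at `b' = -(s-2)` a new fiber `r + 1` close enough to `1` becomes `r_{(s)}`, and clause (3)
survives with the same `a, k`.
-/

/-- The Jankins–Neumann/Eisenbud–Hirsch–Neumann arithmetic criterion: `JN b R` holds
exactly when the Seifert fibered space `S²(b; r_1, …, r_s)` (where `R = (r_1, …, r_s)`
with `0 < r_i < 1`) is *not* an L-space. Here `r_{(1)} ≤ ⋯ ≤ r_{(s)}` denotes the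
nondecreasing rearrangement of `R`, realized as the sorted list `S` (0-indexed). -/
def JN (b : ℤ) (R : List ℚ) : Prop :=
  let s := R.length
  let S := R.mergeSort (· ≤ ·)
  (-((s : ℤ) - 2) ≤ b ∧ b ≤ -2) ∨
  (b = -1 ∧ ∃ a k : ℕ, 0 < a ∧ a < k ∧ 2 * a ≤ k ∧ Nat.Coprime a k ∧
    (∀ i : ℕ, i < s - 2 → S.getD i 0 < 1 / (k : ℚ)) ∧
    S.getD (s - 2) 0 < (a : ℚ) / (k : ℚ) ∧
    S.getD (s - 1) 0 < ((k : ℚ) - (a : ℚ)) / (k : ℚ)) ∨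
  (b = -((s : ℤ) - 1) ∧ ∃ a k : ℕ, 0 < a ∧ a < k ∧ 2 * a ≤ k ∧ Nat.Coprime a k ∧
    (∀ i : ℕ, i < s - 2 → 1 - S.getD (i + 2) 0 < 1 / (k : ℚ)) ∧
    1 - S.getD 1 0 < (a : ℚ) / (k : ℚ) ∧
    1 - S.getD 0 0 < ((k : ℚ) - (a : ℚ)) / (k : ℚ))

namespace List

variable {α : Type*} [LinearOrder α]

theorem mergeSort_append_singleton_of_forall_le {l : List α} {a : α} (h : ∀ x ∈ l, a ≤ x) :
    (l ++ [a]).mergeSort (· ≤ ·) = a :: l.mergeSort (· ≤ ·) := by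
  refine Perm.eq_of_pairwise' (r := (· ≤ ·)) (pairwise_mergeSort' _ _) ?_ ?_
  · exact pairwise_cons.2 ⟨fun x hx => h x ((mergeSort_perm l _).mem_iff.1 hx),
      pairwise_mergeSort' _ l⟩
  · exact (mergeSort_perm _ _).trans
      ((perm_append_singleton a l).trans ((mergeSort_perm l _).symm.cons a))

theorem mergeSort_append_singleton_of_forall_ge {l : List α} {a : α} (h : ∀ x ∈ l, x ≤ a) :
    (l ++ [a]).mergeSort (· ≤ ·) = l.mergeSort (· ≤ ·) ++ [a] := by
  refine Perm.eq_of_pairwise' (r := (· ≤ ·)) (pairwise_mergeSort' _ _) ?_ ?_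
  · refine pairwise_append.2 ⟨pairwise_mergeSort' _ l, pairwise_singleton _ a, ?_⟩
    intro x hx y hy
    rw [mem_singleton.1 hy]
    exact h x ((mergeSort_perm l _).mem_iff.1 hx)
  · exact (mergeSort_perm _ _).trans ((mergeSort_perm l _).symm.append_right [a])

theorem exists_gt_forall_mem_le [NoMaxOrder α] {l : List α} {c : α} (h : ∀ x ∈ l, c < x) :
    ∃ d, c < d ∧ ∀ x ∈ l, d ≤ x := by
  induction l with
  | nil => simpa using exists_gt c
  | cons a l ih =>
    obtain ⟨d, hcd, hd⟩ := ih fun x hx => h x (mem_cons_of_mem a hx)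
    refine ⟨min a d, lt_min (h a mem_cons_self) hcd, ?_⟩
    simp only [mem_cons, forall_eq_or_imp, min_le_iff, le_refl, true_or, true_and]
    exact fun x hx => Or.inr (hd x hx)

theorem exists_lt_forall_mem_ge [NoMinOrder α] {l : List α} {c : α} (h : ∀ x ∈ l, x < c) :
    ∃ d, d < c ∧ ∀ x ∈ l, x ≤ d :=
  exists_gt_forall_mem_le (α := αᵒᵈ) h

end List

namespace JN

/-- Clause (2) of `JN`, the one for `b = -1`. -/
def NegOneClause (R : List ℚ) : Prop :=
  ∃ a k : ℕ, 0 < a ∧ a < k ∧ 2 * a ≤ k ∧ Nat.Coprime a k ∧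
    (∀ i : ℕ, i < R.length - 2 → (R.mergeSort (· ≤ ·)).getD i 0 < 1 / (k : ℚ)) ∧
    (R.mergeSort (· ≤ ·)).getD (R.length - 2) 0 < (a : ℚ) / k ∧
    (R.mergeSort (· ≤ ·)).getD (R.length - 1) 0 < ((k : ℚ) - a) / k

/-- Clause (3) of `JN`, the one for `b = -(s - 1)`. -/
def NegLengthClause (R : List ℚ) : Prop :=
  ∃ a k : ℕ, 0 < a ∧ a < k ∧ 2 * a ≤ k ∧ Nat.Coprime a k ∧
    (∀ i : ℕ, i < R.length - 2 → 1 - (R.mergeSort (· ≤ ·)).getD (i + 2) 0 < 1 / (k : ℚ)) ∧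
    1 - (R.mergeSort (· ≤ ·)).getD 1 0 < (a : ℚ) / k ∧
    1 - (R.mergeSort (· ≤ ·)).getD 0 0 < ((k : ℚ) - a) / k

variable {b : ℤ} {R : List ℚ}

theorem of_le_of_le (h₁ : -((R.length : ℤ) - 2) ≤ b) (h₂ : b ≤ -2) : JN b R :=
  Or.inl ⟨h₁, h₂⟩

theorem of_negOneClause (h : NegOneClause R) : JN (-1) R :=
  Or.inr (Or.inl ⟨rfl, h⟩)

theorem of_negLengthClause (h : NegLengthClause R) : JN (-((R.length : ℤ) - 1)) R :=
  Or.inr (Or.inr ⟨rfl, h⟩)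

theorem negOneClause (h : JN (-1) R) (hR : 3 ≤ R.length) : NegOneClause R := by
  rcases h with ⟨-, h⟩ | ⟨-, h⟩ | ⟨h, -⟩
  · omega
  · exact h
  · omega

theorem negLengthClause (h : JN (-((R.length : ℤ) - 1)) R) (hR : 3 ≤ R.length) :
    NegLengthClause R := by
  rcases h with ⟨h, -⟩ | ⟨h, -⟩ | ⟨-, h⟩
  · omega
  · omega
  · exact h

/-- A new fiber smaller than all others and than `1/k` takes the place of `r_{(1)}`. -/
theorem NegOneClause.exists_append (h : NegOneClause R) (hR : ∀ x ∈ R, 0 < x)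
    (hlen : 2 ≤ R.length) : ∃ ε > 0, ∀ r < ε, NegOneClause (R ++ [r]) := by
  obtain ⟨a, k, ha, hak, h2a, hco, hsmall, hpen, hlast⟩ := h
  obtain ⟨m, hm, hmR⟩ := List.exists_gt_forall_mem_le hR
  have hk : (0 : ℚ) < k := by exact_mod_cast ha.trans hak
  refine ⟨min (1 / k) m, lt_min (by positivity) hm, fun r hr => ?_⟩
  have hsort := List.mergeSort_append_singleton_of_forall_le
    fun x hx => (hr.trans_le (min_le_right _ _)).le.trans (hmR x hx)
  have hlen' : (R ++ [r]).length = R.length + 1 := by simp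
  refine ⟨a, k, ha, hak, h2a, hco, ?_, ?_, ?_⟩ <;> rw [hsort, hlen']
  · rintro (_ | i) hi
    · exact hr.trans_le (min_le_left _ _)
    · exact hsmall i (by omega)
  · rwa [show R.length + 1 - 2 = R.length - 2 + 1 by omega, List.getD_cons_succ]
  · rwa [show R.length + 1 - 1 = R.length - 1 + 1 by omega, List.getD_cons_succ]

/-- A new fiber larger than all others and than `1 - 1/k` takes the place of `r_{(s)}`. -/
theorem NegLengthClause.exists_append (h : NegLengthClause R) (hR : ∀ x ∈ R, x < 1)
    (hlen : 2 ≤ R.length) : ∃ ε > 0, ∀ x, 1 - ε < x → NegLengthClause (R ++ [x]) := by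
  obtain ⟨a, k, ha, hak, h2a, hco, hlarge, hsnd, hfst⟩ := h
  obtain ⟨M, hM, hMR⟩ := List.exists_lt_forall_mem_ge hR
  have hk : (0 : ℚ) < k := by exact_mod_cast ha.trans hak
  refine ⟨min (1 / k) (1 - M), lt_min (by positivity) (by linarith), fun x hx => ?_⟩
  have hxk : 1 - x < 1 / k := by linarith [min_le_left (1 / (k : ℚ)) (1 - M)]
  have hsort := List.mergeSort_append_singleton_of_forall_ge (a := x)
    fun y hy => (hMR y hy).trans (by linarith [min_le_right (1 / (k : ℚ)) (1 - M)])
  have hS : (R.mergeSort (· ≤ ·)).length = R.length := (List.mergeSort_perm R _).length_eq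
  have hlen' : (R ++ [x]).length = R.length + 1 := by simp
  refine ⟨a, k, ha, hak, h2a, hco, ?_, ?_, ?_⟩ <;> rw [hsort]
  · intro i hi
    rw [hlen'] at hi
    rcases (show i + 2 < R.length ∨ i + 2 = R.length by omega) with hi' | hi'
    · rw [List.getD_append _ _ _ _ (by omega)]
      exact hlarge i (by omega)
    · rwa [List.getD_append_right _ _ _ _ (by omega), hS, hi', Nat.sub_self,
        List.getD_cons_zero]
  · rwa [List.getD_append _ _ _ _ (by omega)]
  · rwa [List.getD_append _ _ _ _ (by omega)]

end JN

/-- Lemma 5.5 (rc_integer) of the paper, stated via the arithmetic criterion `JN`: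
if `S²(b′; r_1, …, r_{s−1})` is not an L-space (i.e. `JN b′ R` holds, where
`R = (r_1, …, r_{s−1})` has entries in `(0,1)` and `s ≥ 4`), then
`S²(b′; r_1, …, r_{s−1}, r)` is not an L-space for the stated ranges of `r ∈ (−1, 1)`,
using `S²(b′; …, r) = S²(b′−1; …, r+1)` for `−1 < r < 0`. -/
theorem rc_integer (s : ℕ) (hs : 4 ≤ s) (b' : ℤ) (R : List ℚ)
    (hlen : R.length = s - 1) (hR : ∀ r ∈ R, 0 < r ∧ r < 1)
    (h : JN b' R) :
    ((-((s : ℤ) - 3) ≤ b' ∧ b' ≤ -2) →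
      ∀ r : ℚ, ((0 < r ∧ r < 1) → JN b' (R ++ [r])) ∧
               ((-1 < r ∧ r < 0) → JN (b' - 1) (R ++ [r + 1]))) ∧
    (b' = -1 →
      (∃ ε : ℚ, 0 < ε ∧ ∀ r : ℚ, 0 < r → r < ε → JN b' (R ++ [r])) ∧
      (∀ r : ℚ, -1 < r → r < 0 → JN (b' - 1) (R ++ [r + 1]))) ∧
    (b' = -((s : ℤ) - 2) →
      (∀ r : ℚ, 0 < r → r < 1 → JN b' (R ++ [r])) ∧
      (∃ ε : ℚ, 0 < ε ∧ ∀ r : ℚ, -ε < r → r < 0 → JN (b' - 1) (R ++ [r + 1]))) := by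
  have hlen' : ∀ x, ((R ++ [x]).length : ℤ) = s := fun x => by simp; omega
  refine ⟨?_, ?_, ?_⟩
  · rintro ⟨hb₁, hb₂⟩ r
    exact ⟨fun _ => JN.of_le_of_le (by rw [hlen']; omega) hb₂,
      fun _ => JN.of_le_of_le (by rw [hlen']; omega) (by omega)⟩
  · rintro rfl
    obtain ⟨ε, hε, hext⟩ :=
      (h.negOneClause (by omega)).exists_append (fun x hx => (hR x hx).1) (by omega)
    exact ⟨⟨ε, hε, fun r _ hr => JN.of_negOneClause (hext r hr)⟩,
      fun r _ _ => JN.of_le_of_le (by rw [hlen']; omega) le_rfl⟩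
  · intro hb
    obtain rfl : b' = -((R.length : ℤ) - 1) := by omega
    obtain ⟨ε, hε, hext⟩ :=
      (h.negLengthClause (by omega)).exists_append (fun x hx => (hR x hx).2) (by omega)
    refine ⟨fun r _ _ => JN.of_le_of_le (by rw [hlen']; omega) (by omega), ε, hε, fun r hr _ => ?_⟩
    convert JN.of_negLengthClause (hext (r + 1) (by linarith)) using 1
    rw [hlen']; omega
end

section
/- Let s ≥ 4 and b′ be integers, let r_1, …, r_{s−1} be rationals with 0 < r_i < 1 for all i, and let ρ be a rational with 0 < ρ < 1. Assume JN(b′, (r_1, …, r_{s−1}, ρ)) holds (so in particular −(s−1) ≤ b′ ≤ −1). Then: (1) if −(s−2) ≤ b′ ≤ −2, then JN(b′, (r_1, …, r_{s−1}, r)) holds for every rational 0 < r < 1; (2) if b′ = −1, then there is a rational ε > 0 such that JN(b′, (r_1, …, r_{s−1}, r)) holds for every rational r with 0 < r < ρ + ε and r < 1; (3) if b′ = −(s−1), then there is a rational ε > 0 such that JN(b′, (r_1, …, r_{s−1}, r)) holds for every rational r with ρ − ε < r < 1. (This is Lemma 5.6 (rc_noninteger) of the paper, with part (3) stated, as its proof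 shows, with the conclusion that the space is NOT an L-space.) -/
theorem List.Pairwise.pred_getD_iff_lt_countP {α : Type*} [Preorder α] {S : List α}
    (hS : S.Pairwise (· ≤ ·)) {p : α → Prop} [DecidablePred p]
    (hp : ∀ ⦃x y⦄, x ≤ y → p y → p x) {i : ℕ} (hi : i < S.length) (d : α) :
    p (S.getD i d) ↔ i < S.countP p := by
  induction S generalizing i with
  | nil => simp at hi
  | cons a S ih =>
    obtain ⟨ha, hS⟩ := List.pairwise_cons.mp hS
    cases i with
    | zero =>
      simp only [List.getD_cons_zero, List.countP_pos_iff, List.mem_cons, decide_eq_true_eq]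
      refine ⟨fun hpa => ⟨a, .inl rfl, hpa⟩, ?_⟩
      rintro ⟨x, rfl | hx, hpx⟩
      exacts [hpx, hp (ha x hx) hpx]
    | succ i =>
      rw [List.getD_cons_succ, ih hS (by simpa using hi), List.countP_cons]
      by_cases hpa : p a
      · simp [hpa]
      · have : S.countP p = 0 :=
          List.countP_eq_zero.2 fun x hx hpx => hpa (hp (ha x hx) (by simpa using hpx))
        simp [hpa, this]

theorem List.pred_getD_mergeSort_iff {α : Type*} [LinearOrder α] (L : List α) {p : α → Prop}
    [DecidablePred p] (hp : ∀ ⦃x y⦄, x ≤ y → p y → p x) {i : ℕ} (hi : i < L.length) (d : α) :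
    p ((L.mergeSort (· ≤ ·)).getD i d) ↔ i < L.countP p := by
  rw [(List.pairwise_mergeSort' (· ≤ ·) L).pred_getD_iff_lt_countP hp (by simpa using hi),
    (List.mergeSort_perm L _).countP_eq]

theorem List.countP_append_singleton_le_of_imp {α : Type*} (R : List α) {p : α → Prop}
    [DecidablePred p] {a b : α} (hab : p a → p b) :
    (R ++ [a]).countP p ≤ (R ++ [b]).countP p := by
  simp only [List.countP_append, List.countP_singleton]
  split_ifs <;> simp_all

theorem List.pred_getD_mergeSort_append_singleton_of_imp {α : Type*} [LinearOrder α]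
    (R : List α) {p : α → Prop} [DecidablePred p] (hp : ∀ ⦃x y⦄, x ≤ y → p y → p x)
    {a b : α} (hab : p a → p b) (i : ℕ) (d : α)
    (h : p (((R ++ [a]).mergeSort (· ≤ ·)).getD i d)) :
    p (((R ++ [b]).mergeSort (· ≤ ·)).getD i d) := by
  by_cases hi : i < R.length + 1
  · rw [List.pred_getD_mergeSort_iff _ hp (by simpa using hi)] at h ⊢
    exact h.trans_le (R.countP_append_singleton_le_of_imp hab)
  · rwa [List.getD_eq_default _ _ (by simpa using hi)] at h ⊢

theorem Finset.exists_pos_le_abs_sub_of_ne {α : Type*} [Ring α] [LinearOrder α]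
    [IsStrictOrderedRing α] (T : Finset α) (ρ : α) :
    ∃ ε > 0, ∀ t ∈ T, t ≠ ρ → ε ≤ |t - ρ| := by
  induction T using Finset.induction_on with
  | empty => exact ⟨1, one_pos, by simp⟩
  | insert t T _ ih =>
    obtain ⟨ε, hε, hT⟩ := ih
    simp only [Finset.mem_insert, forall_eq_or_imp]
    by_cases ht : t = ρ
    · exact ⟨ε, hε, fun h => absurd ht h, hT⟩
    · refine ⟨min ε |t - ρ|, lt_min hε (abs_pos.2 (sub_ne_zero.2 ht)), fun _ => min_le_right _ _,
        fun u hu hne => (min_le_left _ _).trans (hT u hu hne)⟩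

theorem exists_JN_neg_one_append_singleton_of_lt_add {R : List ℚ} (hR : R.length ≠ 1) {ρ : ℚ}
    (h : JN (-1) (R ++ [ρ])) : ∃ ε > 0, ∀ r, r < ρ + ε → JN (-1) (R ++ [r]) := by
  simp only [JN, List.length_append, List.length_singleton] at h ⊢
  obtain ⟨-, a, k, ha, hak, h2a, hco, h1, h2, h3⟩ :=
    (h.resolve_left (by norm_num)).resolve_right fun ⟨hb, _⟩ => hR (by omega)
  set T : Finset ℚ := {1 / (k : ℚ), (a : ℚ) / k, (k - (a : ℚ)) / k}
  obtain ⟨ε, hε, hgap⟩ := T.exists_pos_le_abs_sub_of_ne ρ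
  refine ⟨ε, hε, fun r hr => Or.inr (Or.inl ⟨trivial, a, k, ha, hak, h2a, hco, ?_⟩)⟩
  have transfer : ∀ t ∈ T, ∀ i, ((R ++ [ρ]).mergeSort (· ≤ ·)).getD i 0 < t →
      ((R ++ [r]).mergeSort (· ≤ ·)).getD i 0 < t := by
    intro t ht i
    refine R.pred_getD_mergeSort_append_singleton_of_imp (fun _ _ => lt_of_le_of_lt) ?_ i 0
    intro hρt
    have := hgap t ht hρt.ne'
    rw [abs_of_pos (sub_pos.2 hρt)] at this
    linarith
  exact ⟨fun i hi => transfer _ (by simp [T]) i (h1 i hi), transfer _ (by simp [T]) _ h2,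
    transfer _ (by simp [T]) _ h3⟩

theorem exists_JN_neg_length_append_singleton_of_sub_lt {R : List ℚ} (hR : R.length ≠ 1) {ρ : ℚ}
    (h : JN (-R.length) (R ++ [ρ])) :
    ∃ ε > 0, ∀ r, ρ - ε < r → JN (-R.length) (R ++ [r]) := by
  simp only [JN, List.length_append, List.length_singleton] at h ⊢
  obtain ⟨-, a, k, ha, hak, h2a, hco, h1, h2, h3⟩ :=
    (h.resolve_left (by omega)).resolve_left fun ⟨hb, _⟩ => hR (by omega)
  set T : Finset ℚ := {1 - 1 / (k : ℚ), 1 - (a : ℚ) / k, 1 - (k - (a : ℚ)) / k}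
  obtain ⟨ε, hε, hgap⟩ := T.exists_pos_le_abs_sub_of_ne ρ
  refine ⟨ε, hε, fun r hr => Or.inr (Or.inr ⟨by push_cast; ring, a, k, ha, hak, h2a, hco, ?_⟩)⟩
  have transfer : ∀ x, 1 - x ∈ T → ∀ i, 1 - ((R ++ [ρ]).mergeSort (· ≤ ·)).getD i 0 < x →
      1 - ((R ++ [r]).mergeSort (· ≤ ·)).getD i 0 < x := by
    intro x hx i
    -- `c < y` is `¬ y ≤ c`, and `(· ≤ c)` is downward closed.
    simp only [sub_lt_comm (a := (1 : ℚ)), ← not_le]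
    refine mt (R.pred_getD_mergeSort_append_singleton_of_imp (fun _ _ => le_trans) ?_ i 0)
    intro hr'
    by_contra! hlt
    have := hgap _ hx hlt.ne
    rw [abs_of_neg (sub_neg.2 hlt)] at this
    linarith
  exact ⟨fun i hi => transfer (1 / k) (by simp [T]) _ (h1 i hi),
    transfer (a / k) (by simp [T]) _ h2, transfer ((k - a) / k) (by simp [T]) _ h3⟩

theorem rc_noninteger_general (s : ℕ) (hs : 4 ≤ s) (b' : ℤ) (R : List ℚ)
    (hlen : R.length = s - 1)
    (ρ : ℚ)
    (h : JN b' (R ++ [ρ])) :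
    ((-((s : ℤ) - 2) ≤ b' ∧ b' ≤ -2) →
      ∀ r : ℚ, 0 < r → r < 1 → JN b' (R ++ [r])) ∧
    (b' = -1 →
      ∃ ε : ℚ, 0 < ε ∧ ∀ r : ℚ, 0 < r → r < ρ + ε → r < 1 → JN b' (R ++ [r])) ∧
    (b' = -((s : ℤ) - 1) →
      ∃ ε : ℚ, 0 < ε ∧ ∀ r : ℚ, ρ - ε < r → r < 1 → JN b' (R ++ [r])) := by
  have hR : R.length ≠ 1 := by omega
  refine ⟨fun hb r _ _ => Or.inl ?_, fun hb => ?_, fun hb => ?_⟩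
  · simpa [hlen, Nat.sub_add_cancel (by omega : 1 ≤ s)] using hb
  · subst hb
    obtain ⟨ε, hε, hJN⟩ := exists_JN_neg_one_append_singleton_of_lt_add hR h
    exact ⟨ε, hε, fun r _ hr _ => hJN r hr⟩
  · obtain rfl : b' = -R.length := by omega
    obtain ⟨ε, hε, hJN⟩ := exists_JN_neg_length_append_singleton_of_sub_lt hR h
    exact ⟨ε, hε, fun r hr _ => hJN r hr⟩

/-- Lemma 5.6 (rc_noninteger) of the paper, stated via the arithmetic criterion `JN`:
if `S²(b′; r_1, …, r_{s−1}, ρ)` is not an L-space (with `0 < ρ < 1`, entries of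
`R = (r_1, …, r_{s−1})` in `(0,1)`, and `s ≥ 4`), then `S²(b′; r_1, …, r_{s−1}, r)`
is not an L-space for the stated ranges of `r` (part (3) stated, as the paper's
proof shows, with the conclusion that the space is NOT an L-space). -/
theorem rc_noninteger (s : ℕ) (hs : 4 ≤ s) (b' : ℤ) (R : List ℚ)
    (hlen : R.length = s - 1) (hR : ∀ r ∈ R, 0 < r ∧ r < 1)
    (ρ : ℚ) (hρ0 : 0 < ρ) (hρ1 : ρ < 1)
    (h : JN b' (R ++ [ρ])) :
    ((-((s : ℤ) - 2) ≤ b' ∧ b' ≤ -2) →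
      ∀ r : ℚ, 0 < r → r < 1 → JN b' (R ++ [r])) ∧
    (b' = -1 →
      ∃ ε : ℚ, 0 < ε ∧ ∀ r : ℚ, 0 < r → r < ρ + ε → r < 1 → JN b' (R ++ [r])) ∧
    (b' = -((s : ℤ) - 1) →
      ∃ ε : ℚ, 0 < ε ∧ ∀ r : ℚ, ρ - ε < r → r < 1 → JN b' (R ++ [r])) :=
  rc_noninteger_general s hs b' R hlen ρ h
end

section
/- Let s ≥ 4 and b′ be integers and let r_1, …, r_{s−1} be rationals with 0 < r_i < 1 for all i. Assume JN(b′, (r_1, …, r_{s−1})) fails. Then: (1) if b′ ≥ 0, then JN(b′, (r_1, …, r_{s−1}, r)) fails for every rational 0 < r < 1, and if b′ ≤ −(s−1), then JN(b′−1, (r_1, …, r_{s−1}, r+1)) fails for every rational −1 < r < 0; (2) if b′ = −1, then JN(b′, (r_1, …, r_{s−1}, r)) fails for every rational 0 < r < 1. (These are parts (1) and (2) of Lemma 5.7 (rc_integer_Lspace) of the paper: if S²(b′; r_1, …, r_{s−1}) is an L-space, then S²(b′; r_1, …, r_{s−1}, r) is an L-space for the stated ranges of r.) -/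
/-
Outside the window `-(s-1) ≤ b ≤ -1` the criterion fails for trivial reasons, which
gives part (1). For `b = -1` the criterion is monotone under deleting a fibre: after sorting,
the `i`-th smallest entry of `R` is at most the `(i+1)`-st smallest entry of `R ++ [r]`, so the
witness `(a, k)` for `R ++ [r]` is also one for `R`.
-/

theorem List.Sublist.getD_le_getD_succ {α : Type*} [Preorder α] (d : α) :
    ∀ {l₁ l₂ : List α}, l₁.Sublist l₂ → l₂.Pairwise (· ≤ ·) → l₂.length ≤ l₁.length + 1 →
      ∀ i, i + 1 < l₂.length → l₁.getD i d ≤ l₂.getD (i + 1) d := by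
  intro l₁ l₂ hsub
  induction hsub with
  | slnil => simp
  | @cons l₁ l₂ a hsub _ =>
    intro _ hlen i _
    obtain rfl : l₁ = l₂ := hsub.eq_of_length (le_antisymm hsub.length_le (by simpa using hlen))
    simp
  | @cons_cons l₁ l₂ a _ ih =>
    intro hsorted hlen i hi
    obtain ⟨ha, hsorted'⟩ := List.pairwise_cons.mp hsorted
    rcases i with _ | j
    · have hl₂ : 0 < l₂.length := by simpa using hi
      simpa only [List.getD_cons_zero, List.getD_cons_succ, List.getD_eq_getElem l₂ d hl₂]
        using ha _ (List.getElem_mem hl₂)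
    · exact ih hsorted' (by simpa using hlen) j (by simpa using hi)

theorem List.mergeSort_getD_le_mergeSort_append_getD_succ {α : Type*} [LinearOrder α]
    (d : α) (l : List α) (x : α) {i : ℕ} (hi : i < l.length) :
    (l.mergeSort (· ≤ ·)).getD i d ≤ ((l ++ [x]).mergeSort (· ≤ ·)).getD (i + 1) d := by
  have hsorted := List.pairwise_mergeSort' (· ≤ ·) l
  have hsorted' := List.pairwise_mergeSort' (· ≤ ·) (l ++ [x])
  have hsub : (l.mergeSort (· ≤ ·)).Sublist ((l ++ [x]).mergeSort (· ≤ ·)) :=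
    List.sublist_of_subperm_of_pairwise
      ((l.mergeSort_perm _).subperm.trans
        ((List.sublist_append_left l [x]).subperm.trans
          ((l ++ [x]).mergeSort_perm _).symm.subperm))
      hsorted hsorted'
  exact hsub.getD_le_getD_succ d hsorted' (by simp) i (by simpa using hi)

theorem JN.bounds {b : ℤ} {R : List ℚ} (hR : 2 ≤ R.length) (h : JN b R) :
    -((R.length : ℤ) - 1) ≤ b ∧ b ≤ -1 := by
  rcases h with ⟨h₁, h₂⟩ | ⟨rfl, -⟩ | ⟨rfl, -⟩ <;> omega

theorem JN.of_append_singleton_neg_one {R : List ℚ} {r : ℚ} (hR : 2 ≤ R.length)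
    (h : JN (-1) (R ++ [r])) : JN (-1) R := by
  simp only [JN, List.length_append, List.length_singleton] at h
  rcases h with ⟨-, h⟩ | ⟨-, a, k, ha, hak, h2ak, hcop, hsmall, hmid, hlarge⟩ | ⟨h, -⟩
  · omega
  · have hle : ∀ i < R.length, (R.mergeSort (· ≤ ·)).getD i 0
        ≤ ((R ++ [r]).mergeSort (· ≤ ·)).getD (i + 1) 0 :=
      fun i hi => List.mergeSort_getD_le_mergeSort_append_getD_succ 0 R r hi
    refine Or.inr (Or.inl ⟨rfl, a, k, ha, hak, h2ak, hcop, fun i hi => ?_, ?_, ?_⟩)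
    · exact (hle i (by omega)).trans_lt (hsmall (i + 1) (by omega))
    · have hmid' := hle (R.length - 2) (by omega)
      rw [show R.length - 2 + 1 = R.length + 1 - 2 by omega] at hmid'
      exact hmid'.trans_lt hmid
    · have hlarge' := hle (R.length - 1) (by omega)
      rw [show R.length - 1 + 1 = R.length + 1 - 1 by omega] at hlarge'
      exact hlarge'.trans_lt hlarge
  · omega

theorem rc_integer_Lspace_general (s : ℕ) (hs : 4 ≤ s) (b' : ℤ) (R : List ℚ)
    (hlen : R.length = s - 1)
    (h : ¬ JN b' R) :
    ((0 ≤ b' → ∀ r : ℚ, 0 < r → r < 1 → ¬ JN b' (R ++ [r])) ∧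
     (b' ≤ -((s : ℤ) - 1) → ∀ r : ℚ, -1 < r → r < 0 → ¬ JN (b' - 1) (R ++ [r + 1]))) ∧
    (b' = -1 → ∀ r : ℚ, 0 < r → r < 1 → ¬ JN b' (R ++ [r])) := by
  have hR : 2 ≤ R.length := by omega
  have hlen' : ∀ x : ℚ, (R ++ [x]).length = s := fun x => by
    rw [List.length_append, List.length_singleton]; omega
  refine ⟨⟨fun hb r _ _ hJN => ?_, fun hb r _ _ hJN => ?_⟩, fun hb r _ _ hJN => ?_⟩
  · have := hJN.bounds (by rw [hlen']; omega)
    rw [hlen'] at this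
    omega
  · have := hJN.bounds (by rw [hlen']; omega)
    rw [hlen'] at this
    omega
  · subst hb
    exact h (hJN.of_append_singleton_neg_one hR)

/-- Parts (1) and (2) of Lemma 5.7 (rc_integer_Lspace) of the paper, stated via the
arithmetic criterion `JN`: if `S²(b′; r_1, …, r_{s−1})` is an L-space (i.e. `JN b′ R`
fails, where `R = (r_1, …, r_{s−1})` has entries in `(0,1)` and `s ≥ 4`), then
`S²(b′; r_1, …, r_{s−1}, r)` is an L-space for the stated ranges of `r`, using
`S²(b′; …, r) = S²(b′−1; …, r+1)` for `−1 < r < 0`. -/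
theorem rc_integer_Lspace (s : ℕ) (hs : 4 ≤ s) (b' : ℤ) (R : List ℚ)
    (hlen : R.length = s - 1) (hR : ∀ r ∈ R, 0 < r ∧ r < 1)
    (h : ¬ JN b' R) :
    ((0 ≤ b' → ∀ r : ℚ, 0 < r → r < 1 → ¬ JN b' (R ++ [r])) ∧
     (b' ≤ -((s : ℤ) - 1) → ∀ r : ℚ, -1 < r → r < 0 → ¬ JN (b' - 1) (R ++ [r + 1]))) ∧
    (b' = -1 → ∀ r : ℚ, 0 < r → r < 1 → ¬ JN b' (R ++ [r])) :=
  rc_integer_Lspace_general s hs b' R hlen h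
end

section
/- Let s ≥ 4 and b′ be integers, let r_1, …, r_{s−1} be rationals with 0 < r_i < 1 for all i, and let ρ be a rational with 0 < ρ < 1. Assume JN(b′, (r_1, …, r_{s−1}, ρ)) fails. Then: (1) if b′ ≤ −s or b′ ≥ 0, then JN(b′, (r_1, …, r_{s−1}, r)) fails for every rational 0 < r < 1; (2) if b′ = −1, then JN(b′, (r_1, …, r_{s−1}, r)) fails for every rational ρ < r < 1; (3) if b′ = −(s−1), then JN(b′, (r_1, …, r_{s−1}, r)) fails for every rational 0 < r < ρ. (This is Lemma 5.8 (rc_noninteger_Lspace) of the paper: if S²(b′; r_1, …, r_{s−1}, ρ) is an L-space, then S²(b′; r_1, …, r_{s−1}, r) is an L-space for the stated ranges of r.) -/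
namespace List

variable {α : Type*} [LinearOrder α]

theorem getD_orderedInsert_mono {l : List α} (hl : l.Pairwise (· ≤ ·)) {x y : α} (hxy : x ≤ y)
    (i : ℕ) (d : α) :
    (l.orderedInsert (· ≤ ·) x).getD i d ≤ (l.orderedInsert (· ≤ ·) y).getD i d := by
  induction l generalizing x y i with
  | nil => cases i <;> simp [hxy]
  | cons h t ih =>
    have ht := hl.of_cons
    by_cases hxh : x ≤ h
    · by_cases hyh : y ≤ h
      · cases i <;> simp [hxh, hyh, hxy]
      · have hins : t.orderedInsert (· ≤ ·) h = h :: t := by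
          cases t with
          | nil => rfl
          | cons c t => exact orderedInsert_cons_of_le _ _ (rel_of_pairwise_cons hl (by simp))
        cases i with
        | zero => simp [hxh, hyh]
        | succ i => simpa [hxh, hyh, hins] using ih ht (le_of_not_ge hyh) i
    · have hyh : ¬ y ≤ h := fun hy => hxh (hxy.trans hy)
      cases i with
      | zero => simp [hxh, hyh]
      | succ i => simpa [hxh, hyh] using ih ht hxy i

theorem mergeSort_append_singleton (l : List α) (x : α) :
    (l ++ [x]).mergeSort (· ≤ ·) = (l.mergeSort (· ≤ ·)).orderedInsert (· ≤ ·) x :=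
  Perm.eq_of_pairwise' (pairwise_mergeSort' _ _) ((pairwise_mergeSort' _ l).orderedInsert x _) <|
    calc (l ++ [x]).mergeSort (· ≤ ·)
        _ ~ x :: l := (mergeSort_perm _ _).trans (perm_append_singleton x l)
        _ ~ x :: l.mergeSort (· ≤ ·) := (mergeSort_perm l _).symm.cons x
        _ ~ _ := (perm_orderedInsert _ x _).symm

theorem getD_mergeSort_append_singleton_mono (l : List α) {x y : α} (hxy : x ≤ y) (i : ℕ)
    (d : α) :
    ((l ++ [x]).mergeSort (· ≤ ·)).getD i d ≤ ((l ++ [y]).mergeSort (· ≤ ·)).getD i d := by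
  rw [mergeSort_append_singleton, mergeSort_append_singleton]
  exact getD_orderedInsert_mono (pairwise_mergeSort' _ l) hxy i d

end List

section

variable {b : ℤ} {R : List ℚ} {x y : ℚ}

theorem JN.append_singleton_anti (hb : b ≠ -(R.length : ℤ)) (hxy : x ≤ y)
    (h : JN b (R ++ [y])) : JN b (R ++ [x]) := by
  have hmono := R.getD_mergeSort_append_singleton_mono hxy
  simp only [JN, List.length_append, List.length_singleton] at h ⊢
  rcases h with hsmall | ⟨hb1, a, k, ha, hak, h2a, hcop, hlow, hsub, htop⟩ | ⟨hb3, -⟩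
  · exact Or.inl hsmall
  · exact Or.inr <| Or.inl ⟨hb1, a, k, ha, hak, h2a, hcop,
      fun i hi => (hmono i 0).trans_lt (hlow i hi), (hmono _ 0).trans_lt hsub,
      (hmono _ 0).trans_lt htop⟩
  · exact absurd (by push_cast at hb3; linarith) hb

theorem JN.append_singleton_mono (hb : b ≠ -1) (hxy : x ≤ y)
    (h : JN b (R ++ [x])) : JN b (R ++ [y]) := by
  have hmono := R.getD_mergeSort_append_singleton_mono hxy
  simp only [JN, List.length_append, List.length_singleton] at h ⊢
  rcases h with hsmall | ⟨hb1, -⟩ | ⟨hb3, a, k, ha, hak, h2a, hcop, hhigh, hsub, hbot⟩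
  · exact Or.inl hsmall
  · exact absurd hb1 hb
  · exact Or.inr <| Or.inr ⟨hb3, a, k, ha, hak, h2a, hcop,
      fun i hi => lt_of_le_of_lt (by linarith [hmono (i + 2) 0]) (hhigh i hi),
      lt_of_le_of_lt (by linarith [hmono 1 0]) hsub,
      lt_of_le_of_lt (by linarith [hmono 0 0]) hbot⟩

end

theorem rc_noninteger_Lspace_general (s : ℕ) (hs : 4 ≤ s) (b' : ℤ) (R : List ℚ)
    (hlen : R.length = s - 1)
    (ρ : ℚ)
    (h : ¬ JN b' (R ++ [ρ])) :
    ((b' ≤ -(s : ℤ) ∨ 0 ≤ b') → ∀ r : ℚ, 0 < r → r < 1 → ¬ JN b' (R ++ [r])) ∧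
    (b' = -1 → ∀ r : ℚ, ρ < r → r < 1 → ¬ JN b' (R ++ [r])) ∧
    (b' = -((s : ℤ) - 1) → ∀ r : ℚ, 0 < r → r < ρ → ¬ JN b' (R ++ [r])) := by
  have hlen' : (R.length : ℤ) = s - 1 := by omega
  refine ⟨fun hb r _ _ hr => ?_, fun hb r hρr _ hr => ?_, fun hb r _ hrρ hr => ?_⟩
  · rcases le_total r ρ with hrρ | hρr
    · exact h (hr.append_singleton_mono (by omega) hrρ)
    · exact h (hr.append_singleton_anti (by omega) hρr)
  · exact h (hr.append_singleton_anti (by omega) hρr.le)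
  · exact h (hr.append_singleton_mono (by omega) hrρ.le)

/-- Lemma 5.8 (rc_noninteger_Lspace) of the paper, stated via the arithmetic criterion
`JN`: if `S²(b′; r_1, …, r_{s−1}, ρ)` is an L-space (i.e. `JN b′ (R ++ [ρ])` fails,
with `0 < ρ < 1`, entries of `R = (r_1, …, r_{s−1})` in `(0,1)`, and `s ≥ 4`), then
`S²(b′; r_1, …, r_{s−1}, r)` is an L-space for the stated ranges of `r`. -/
theorem rc_noninteger_Lspace (s : ℕ) (hs : 4 ≤ s) (b' : ℤ) (R : List ℚ)
    (hlen : R.length = s - 1) (hR : ∀ r ∈ R, 0 < r ∧ r < 1)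
    (ρ : ℚ) (hρ0 : 0 < ρ) (hρ1 : ρ < 1)
    (h : ¬ JN b' (R ++ [ρ])) :
    ((b' ≤ -(s : ℤ) ∨ 0 ≤ b') → ∀ r : ℚ, 0 < r → r < 1 → ¬ JN b' (R ++ [r])) ∧
    (b' = -1 → ∀ r : ℚ, ρ < r → r < 1 → ¬ JN b' (R ++ [r])) ∧
    (b' = -((s : ℤ) - 1) → ∀ r : ℚ, 0 < r → r < ρ → ¬ JN b' (R ++ [r])) :=
  rc_noninteger_Lspace_general s hs b' R hlen ρ h
end

section
/- Let s ≥ 4 and b be integers, let r_1, …, r_{s−1} be rationals with 0 < r_i < 1 for all i, and let t, u, v, w be integers with t·w − u·v = 1 and 0 ≤ w < v. For a rational q, say L(q) holds if either q ∈ ℤ and JN(b + q, (r_1, …, r_{s−1})) fails, or q ∉ ℤ and JN(b + ⌊q⌋, (r_1, …, r_{s−1}, q − ⌊q⌋)) fails (so L(q) encodes that the Seifert fibered space Y = S²(b; r_1, …, r_{s−1}, q) is an L-space). Then the set of integers n with n·t + v ≠ 0 and L((n·u + w)/(n·t + v)) is infinite if and only if either t = 0 or L(u/t) holds. (This is Proposition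 5.2 of the paper expressed arithmetically: the family Y_n = S²(b; r_1, …, r_{s−1}, (nu+w)/(nt+v)) contains infinitely many L-spaces if and only if the limit Y_∞ = S²(b; r_1, …, r_{s−1}, u/t) is an L-space, where for t = 0 the limit is a connected sum of lens spaces and hence an L-space.) -/
/-- `IsLspaceParam b R q` encodes that the Seifert fibered space
`Y = S²(b; r_1, …, r_{s−1}, q)` (where `R = (r_1, …, r_{s−1})`) is an L-space:
either `q` is an integer and `JN (b + q) R` fails, or `q` is not an integer and
`JN (b + ⌊q⌋) (R ++ [q − ⌊q⌋])` fails. -/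
def IsLspaceParam (b : ℤ) (R : List ℚ) (q : ℚ) : Prop :=
  ((∃ z : ℤ, q = (z : ℚ)) ∧ ¬ JN (b + ⌊q⌋) R) ∨
  ((¬ ∃ z : ℤ, q = (z : ℚ)) ∧ ¬ JN (b + ⌊q⌋) (R ++ [q - ⌊q⌋]))

/-!
The clauses of `JN` only say how many entries of `R` lie on either side of a few thresholds, so
they can be rewritten with counts, independently of the sorting. In this form, as a function of an
appended entry `y`, clause (2) is open and down-closed, and clause (3), the same condition for the
entries `1 - r`, is open and up-closed. Hence if `S²(b; R, x₀)` is not an L-space, neither is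
`S²(b; R, x)` for `x ≠ x₀` near `x₀`, while if it is one, so is `S²(b; R, x)` for all `x` near
`x₀` on one side of it. Finally `(nu + w)/(nt + v) = u/t + 1/(t(nt + v))` tends to `u/t` from
above as `n → ∞` and from below as `n → -∞`.
-/

open Filter Topology Set

theorem List.Pairwise.getElem_iff_lt_countP {α : Type*} [Preorder α] {p : α → Bool}
    (hp : ∀ ⦃a b⦄, a ≤ b → p b → p a) {T : List α} (hT : T.Pairwise (· ≤ ·)) :
    ∀ {i : ℕ} (hi : i < T.length), p T[i] ↔ i < T.countP p := by
  induction T with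
  | nil => simp
  | cons a T ih =>
    rw [List.pairwise_cons] at hT
    have hnone : p a = false → T.countP p = 0 := fun ha =>
      List.countP_eq_zero.mpr fun x hx hpx => by simp [hp (hT.1 x hx) hpx] at ha
    rintro (_ | i) hi
    · cases ha : p a <;> simp [ha, hnone]
    · have hi' : i < T.length := by simpa using hi
      cases ha : p a
      · have hpi : p T[i] = false := by
          by_contra h; simp [hp (hT.1 _ (List.getElem_mem hi')) (by simpa using h)] at ha
        simp [hpi, ha, hnone]
      · simp [ha, ih hT.2 hi']

section Sorted

variable {α : Type*} [LinearOrder α] {T : List α}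

theorem List.Pairwise.getD_lt_iff (hT : T.Pairwise (· ≤ ·)) {i : ℕ} (hi : i < T.length) {d : α}
    (c : α) :
    T.getD i d < c ↔ i + T.countP (fun r => c ≤ r) < T.length := by
  have hsplit : T.countP (fun r => r < c) + T.countP (fun r => c ≤ r) = T.length := by
    rw [T.length_eq_countP_add_countP (fun r => r < c)]; simp
  have := hT.getElem_iff_lt_countP (p := fun r => r < c)
    (fun a b hab h => by simp at h ⊢; exact hab.trans_lt h) hi
  simp only [decide_eq_true_eq] at this
  rw [List.getD_eq_getElem _ _ hi, this]
  omega

theorem List.Pairwise.lt_getD_iff (hT : T.Pairwise (· ≤ ·)) {i : ℕ} (hi : i < T.length) {d : α}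
    (c : α) :
    c < T.getD i d ↔ T.countP (fun r => r ≤ c) ≤ i := by
  have := hT.getElem_iff_lt_countP (p := fun r => r ≤ c)
    (fun a b hab h => by simp at h ⊢; exact hab.trans h) hi
  rw [List.getD_eq_getElem _ _ hi, ← not_le, ← not_lt]
  simpa using this.not

end Sorted

/-- Clause (2) of `JN`, rewritten with counts instead of order statistics, so that it does not
depend on the order of the entries of `R`. -/
def JNLow (R : List ℚ) : Prop :=
  ∃ a k : ℕ, 0 < a ∧ a < k ∧ 2 * a ≤ k ∧ Nat.Coprime a k ∧
    R.countP (fun r => 1 / (k : ℚ) ≤ r) ≤ 2 ∧ R.countP (fun r => (a : ℚ) / (k : ℚ) ≤ r) ≤ 1 ∧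
    R.countP (fun r => ((k : ℚ) - (a : ℚ)) / (k : ℚ) ≤ r) = 0

section JNClauses

variable {T : List ℚ}

theorem List.Pairwise.jn_lowClause_iff (hT : T.Pairwise (· ≤ ·)) {n : ℕ} (hn : T.length = n)
    (hn2 : 2 ≤ n) (a k : ℕ) :
    ((∀ i : ℕ, i < n - 2 → T.getD i 0 < 1 / (k : ℚ)) ∧
      T.getD (n - 2) 0 < (a : ℚ) / (k : ℚ) ∧ T.getD (n - 1) 0 < ((k : ℚ) - (a : ℚ)) / (k : ℚ)) ↔
    T.countP (fun r => 1 / (k : ℚ) ≤ r) ≤ 2 ∧ T.countP (fun r => (a : ℚ) / (k : ℚ) ≤ r) ≤ 1 ∧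
      T.countP (fun r => ((k : ℚ) - (a : ℚ)) / (k : ℚ) ≤ r) = 0 := by
  subst hn
  have hle := fun c : ℚ => T.countP_le_length (p := fun r => c ≤ r)
  rw [hT.getD_lt_iff (by omega), hT.getD_lt_iff (by omega)]
  constructor
  · rintro ⟨h1, h2, h3⟩
    refine ⟨?_, by omega, by omega⟩
    by_contra h
    have := h1 (T.length - 3) (by have := hle (1 / k); omega)
    rw [hT.getD_lt_iff (by omega)] at this
    omega
  · rintro ⟨h1, h2, h3⟩
    exact ⟨fun i hi => (hT.getD_lt_iff (by omega) _).mpr (by omega), by omega, by omega⟩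

theorem List.Pairwise.jn_highClause_iff (hT : T.Pairwise (· ≤ ·)) {n : ℕ} (hn : T.length = n)
    (hn2 : 2 ≤ n) (a k : ℕ) :
    ((∀ i : ℕ, i < n - 2 → 1 - T.getD (i + 2) 0 < 1 / (k : ℚ)) ∧
      1 - T.getD 1 0 < (a : ℚ) / (k : ℚ) ∧ 1 - T.getD 0 0 < ((k : ℚ) - (a : ℚ)) / (k : ℚ)) ↔
    (T.map (1 - ·)).countP (fun r => 1 / (k : ℚ) ≤ r) ≤ 2 ∧
      (T.map (1 - ·)).countP (fun r => (a : ℚ) / (k : ℚ) ≤ r) ≤ 1 ∧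
      (T.map (1 - ·)).countP (fun r => ((k : ℚ) - (a : ℚ)) / (k : ℚ) ≤ r) = 0 := by
  subst hn
  have hle := fun c : ℚ => T.countP_le_length (p := fun r => r ≤ c)
  have key : ∀ i, i < T.length → ∀ c : ℚ, 1 - T.getD i 0 < c ↔ T.countP (fun r => r ≤ 1 - c) ≤ i :=
    fun i hi c => sub_lt_comm.trans (hT.lt_getD_iff hi _)
  simp only [List.countP_map, Function.comp_def, le_sub_comm (b := (1 : ℚ)), key 0 (by omega),
    key 1 (by omega)]
  constructor
  · rintro ⟨h1, h2, h3⟩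
    refine ⟨?_, h2, by omega⟩
    by_contra h
    have := hle (1 - 1 / k)
    have := h1 0 (by omega)
    rw [zero_add, key 2 (by omega)] at this
    omega
  · rintro ⟨h1, h2, h3⟩
    exact ⟨fun i hi => (key _ (by omega) _).mpr (by omega), h2, by omega⟩

end JNClauses

theorem jn_iff_jnLow {b : ℤ} {R : List ℚ} (hl : 2 ≤ R.length) :
    JN b R ↔ (-((R.length : ℤ) - 2) ≤ b ∧ b ≤ -2) ∨ (b = -1 ∧ JNLow R) ∨
      (b = -((R.length : ℤ) - 1) ∧ JNLow (R.map (1 - ·))) := by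
  have hS := List.pairwise_mergeSort' (· ≤ ·) R
  have hperm := List.mergeSort_perm R (fun a b => decide (a ≤ b))
  have hlen := List.length_mergeSort (le := fun a b : ℚ => decide (a ≤ b)) (l := R)
  simp only [JN, JNLow, hS.jn_lowClause_iff hlen hl, hS.jn_highClause_iff hlen hl, hperm.countP_eq,
    (hperm.map _).countP_eq]

theorem List.countP_append_singleton_le {α : Type*} {p : α → Bool} (R : List α) {y y' : α}
    (h : p y → p y') : (R ++ [y]).countP p ≤ (R ++ [y']).countP p := by
  simp only [List.countP_append, List.countP_singleton]
  split_ifs <;> simp_all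

section JNLow

variable {R R' : List ℚ} {y y' : ℚ}

theorem JNLow.mono (hR : JNLow R)
    (h : ∀ c : ℚ, 0 < c → R'.countP (fun r => c ≤ r) ≤ R.countP (fun r => c ≤ r)) : JNLow R' := by
  obtain ⟨a, k, ha, hak, h2a, hcop, h1, h2, h3⟩ := hR
  have ha' : (0 : ℚ) < a := by exact_mod_cast ha
  have hk : (a : ℚ) < k := by exact_mod_cast hak
  have hk0 : (0 : ℚ) < k := ha'.trans hk
  exact ⟨a, k, ha, hak, h2a, hcop, (h _ (by positivity)).trans h1, (h _ (by positivity)).trans h2,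
    Nat.le_zero.mp (h3 ▸ h _ (div_pos (by linarith) hk0))⟩

theorem JNLow.of_append (h : JNLow (R ++ [y])) : JNLow R :=
  h.mono fun _ _ => (List.sublist_append_left R [y]).countP_le

theorem JNLow.append_of_le (h : JNLow (R ++ [y])) (hy : y' ≤ y) : JNLow (R ++ [y']) :=
  h.mono fun _ _ => R.countP_append_singleton_le fun h => by simp_all; linarith

theorem JNLow.append_of_nonpos (h : JNLow R) (hy : y ≤ 0) : JNLow (R ++ [y]) :=
  h.mono fun c hc => by simp [List.countP_append, not_le.mpr (hy.trans_lt hc)]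

theorem JNLow.eventually_append (h : JNLow (R ++ [y])) : ∀ᶠ y' in 𝓝 y, JNLow (R ++ [y']) := by
  have key (c : ℚ) :
      ∀ᶠ y' in 𝓝 y, (R ++ [y']).countP (fun r => c ≤ r) ≤ (R ++ [y]).countP (fun r => c ≤ r) := by
    rcases le_or_gt c y with hc | hc
    · exact .of_forall fun _ => R.countP_append_singleton_le fun _ => by simpa using hc
    · filter_upwards [eventually_lt_nhds hc] with y' hy'
      exact R.countP_append_singleton_le fun h => by simp at h; linarith
  obtain ⟨a, k, ha, hak, h2a, hcop, h1, h2, h3⟩ := h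
  filter_upwards [key (1 / k), key (a / k), key ((k - a) / k)] with y' e1 e2 e3
  exact ⟨a, k, ha, hak, h2a, hcop, e1.trans h1, e2.trans h2, Nat.le_zero.mp (h3 ▸ e3)⟩

theorem JNLow.eventually_append_nhds_zero (h : JNLow R) : ∀ᶠ y in 𝓝 0, JNLow (R ++ [y]) :=
  (h.append_of_nonpos le_rfl).eventually_append

theorem eventually_not_jnLow_append (hR : ∀ r ∈ R, 0 < r) (hl : 3 ≤ R.length) :
    ∀ᶠ y in 𝓝 1, ¬JNLow (R ++ [y]) := by
  have hnear : ∀ᶠ y in 𝓝 (1 : ℚ), ∀ r ∈ R, 1 - r < y :=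
    (eventually_all_finite R.finite_toSet).mpr fun r hr =>
      eventually_gt_nhds (by linarith [hR r hr])
  filter_upwards [hnear] with y hy ⟨a, k, ha, hak, _, _, h1, _, h3⟩
  -- some entry of `R` lies below `1/k`, while `y < (k - a)/k ≤ 1 - 1/k`
  obtain ⟨r, hr, hrk⟩ : ∃ r ∈ R, r < 1 / k := by
    by_contra! hall
    have := (List.countP_eq_length (p := fun r => 1 / (k : ℚ) ≤ r)).mpr (by simpa using hall)
    have := (List.sublist_append_left R [y]).countP_le (p := fun r => 1 / (k : ℚ) ≤ r)
    omega
  have hyk : y < ((k : ℚ) - a) / k := by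
    simpa using List.countP_eq_zero.mp h3 y (by simp)
  have ha' : (1 : ℚ) ≤ a := by exact_mod_cast ha
  have hk : (0 : ℚ) < k := by exact_mod_cast ha.trans hak
  have : ((k : ℚ) - a) / k ≤ 1 - 1 / k := by rw [sub_div, div_self hk.ne']; gcongr
  linarith [hy r hr]

end JNLow

section JNAppend

variable {R : List ℚ}

theorem jn_append_iff (hl : 1 ≤ R.length) (c : ℤ) (y : ℚ) :
    JN c (R ++ [y]) ↔ (-((R.length : ℤ) - 1) ≤ c ∧ c ≤ -2) ∨ (c = -1 ∧ JNLow (R ++ [y])) ∨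
      (c = -(R.length : ℤ) ∧ JNLow (R.map (1 - ·) ++ [1 - y])) := by
  rw [jn_iff_jnLow (by simp; omega)]
  simp only [List.length_append, List.length_singleton, Nat.cast_add, Nat.cast_one, List.map_append,
    List.map_cons, List.map_nil]
  rw [show (R.length : ℤ) + 1 - 2 = R.length - 1 by ring,
    show (R.length : ℤ) + 1 - 1 = R.length by ring]

theorem jn_append_eventually (hl : 1 ≤ R.length) {c : ℤ} {y : ℚ} (h : JN c (R ++ [y])) :
    ∀ᶠ y' in 𝓝 y, JN c (R ++ [y']) := by
  simp only [jn_append_iff hl] at h ⊢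
  rcases h with h | ⟨rfl, h⟩ | ⟨rfl, h⟩
  · exact .of_forall fun _ => Or.inl h
  · filter_upwards [h.eventually_append] with y' h' using Or.inr (Or.inl ⟨rfl, h'⟩)
  · filter_upwards [(tendsto_const_nhds.sub tendsto_id).eventually h.eventually_append] with y' h'
      using Or.inr (Or.inr ⟨rfl, h'⟩)

theorem jn_append_antitone_or_monotone (hl : 2 ≤ R.length) (c : ℤ) :
    Antitone (fun y => JN c (R ++ [y])) ∨ Monotone (fun y => JN c (R ++ [y])) := by
  by_cases hc : c = -(R.length : ℤ)
  · refine Or.inr fun y y' hyy' => ?_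
    simp only [le_Prop_eq, jn_append_iff (by omega : 1 ≤ R.length)]
    rintro (h | ⟨h1, _⟩ | ⟨h1, h⟩)
    · omega
    · omega
    · exact Or.inr (Or.inr ⟨h1, h.append_of_le (by linarith)⟩)
  · refine Or.inl fun y y' hyy' => ?_
    simp only [le_Prop_eq, jn_append_iff (by omega : 1 ≤ R.length)]
    rintro (h | ⟨h1, h⟩ | ⟨h1, _⟩)
    · exact Or.inl h
    · exact Or.inr (Or.inl ⟨h1, h.append_of_le hyy'⟩)
    · exact absurd h1 hc

/-- The value of `JN c (R ++ [y])` for all `y` near `0`. -/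
def JNAtZero (c : ℤ) (R : List ℚ) : Prop :=
  (-((R.length : ℤ) - 1) ≤ c ∧ c ≤ -2) ∨ (c = -1 ∧ JNLow R)

/-- The value of `JN c (R ++ [y])` for all `y` near `1`. -/
def JNAtOne (c : ℤ) (R : List ℚ) : Prop :=
  (-((R.length : ℤ) - 1) ≤ c ∧ c ≤ -2) ∨ (c = -(R.length : ℤ) ∧ JNLow (R.map (1 - ·)))

theorem eventually_jn_append_iff_jnAtZero (hR : ∀ r ∈ R, r < 1) (hl : 3 ≤ R.length) (c : ℤ) :
    ∀ᶠ y in 𝓝 0, (JN c (R ++ [y]) ↔ JNAtZero c R) := by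
  have hR' : ∀ r ∈ R.map (1 - ·), 0 < r := List.forall_mem_map.mpr fun r hr => sub_pos.mpr (hR r hr)
  have hto : Tendsto (fun y : ℚ => 1 - y) (𝓝 0) (𝓝 1) :=
    (continuous_sub_left 1).tendsto' _ _ (sub_zero 1)
  have hhigh : ∀ᶠ y in 𝓝 (0 : ℚ), ¬JNLow (R.map (1 - ·) ++ [1 - y]) :=
    hto.eventually (eventually_not_jnLow_append hR' (by simpa using hl))
  have hlow : ∀ᶠ y in 𝓝 (0 : ℚ), JNLow R → JNLow (R ++ [y]) := by
    by_cases h : JNLow R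
    · exact h.eventually_append_nhds_zero.mono fun _ h' _ => h'
    · exact .of_forall fun _ h' => absurd h' h
  filter_upwards [hhigh, hlow] with y hy hy'
  have := @JNLow.of_append R y
  rw [jn_append_iff (by omega), JNAtZero]
  tauto

theorem eventually_jn_append_iff_jnAtOne (hR : ∀ r ∈ R, 0 < r) (hl : 3 ≤ R.length) (c : ℤ) :
    ∀ᶠ y in 𝓝 1, (JN c (R ++ [y]) ↔ JNAtOne c R) := by
  have hto : Tendsto (fun y : ℚ => 1 - y) (𝓝 1) (𝓝 0) :=
    (continuous_sub_left 1).tendsto' _ _ (sub_self 1)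
  have hhigh : ∀ᶠ y in 𝓝 (1 : ℚ), JNLow (R.map (1 - ·)) → JNLow (R.map (1 - ·) ++ [1 - y]) := by
    by_cases h : JNLow (R.map (1 - ·))
    · exact (hto.eventually h.eventually_append_nhds_zero).mono fun _ h' _ => h'
    · exact .of_forall fun _ h' => absurd h' h
  filter_upwards [eventually_not_jnLow_append hR hl, hhigh] with y hy hy'
  have := @JNLow.of_append (R.map (1 - ·)) (1 - y)
  rw [jn_append_iff (by omega), JNAtOne]
  tauto

theorem jn_iff_jnAtZero_and_jnAtOne (hl : 3 ≤ R.length) (c : ℤ) :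
    JN c R ↔ JNAtZero c R ∧ JNAtOne (c - 1) R := by
  rw [jn_iff_jnLow (by omega), JNAtZero, JNAtOne]
  constructor
  · rintro (h | ⟨rfl, h⟩ | ⟨h1, h⟩)
    · exact ⟨Or.inl ⟨by omega, h.2⟩, Or.inl ⟨by omega, by omega⟩⟩
    · exact ⟨Or.inr ⟨rfl, h⟩, Or.inl ⟨by omega, by omega⟩⟩
    · exact ⟨Or.inl ⟨by omega, by omega⟩, Or.inr ⟨by omega, h⟩⟩
  · rintro ⟨h | ⟨h1, h⟩, h' | ⟨h1', h'⟩⟩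
    · exact Or.inl ⟨by omega, h.2⟩
    · exact Or.inr (Or.inr ⟨by omega, h'⟩)
    · exact Or.inr (Or.inl ⟨h1, h⟩)
    · omega

end JNAppend

section IsLspaceParam

variable {b : ℤ} {R : List ℚ}

theorem isLspaceParam_intCast (m : ℤ) : IsLspaceParam b R m ↔ ¬JN (b + m) R := by
  simp [IsLspaceParam]

theorem isLspaceParam_iff_of_mem_Ioo {x : ℚ} {m : ℤ} (hx : x ∈ Ioo (m : ℚ) (m + 1)) :
    IsLspaceParam b R x ↔ ¬JN (b + m) (R ++ [x - m]) := by
  have hfloor : ⌊x⌋ = m := Int.floor_eq_iff.mpr ⟨hx.1.le, hx.2⟩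
  have hnint : ¬∃ z : ℤ, x = z := by
    rintro ⟨z, rfl⟩
    rw [Int.floor_intCast] at hfloor
    exact hx.1.ne (by rw [hfloor])
  simp [IsLspaceParam, hfloor, hnint]

theorem exists_intCast_or_mem_Ioo (x : ℚ) : (∃ m : ℤ, x = m) ∨ x ∈ Ioo (⌊x⌋ : ℚ) (⌊x⌋ + 1) := by
  by_cases h : ∃ m : ℤ, x = m
  · exact Or.inl h
  · exact Or.inr ⟨(Int.floor_le x).lt_of_ne fun h' => h ⟨_, h'.symm⟩, Int.lt_floor_add_one x⟩

theorem eventually_nhdsGT_isLspaceParam_iff (hR : ∀ r ∈ R, r < 1) (hl : 3 ≤ R.length) (m : ℤ) :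
    ∀ᶠ x in 𝓝[>] (m : ℚ), (IsLspaceParam b R x ↔ ¬JNAtZero (b + m) R) := by
  have hto : Tendsto (fun x : ℚ => x - m) (𝓝[>] (m : ℚ)) (𝓝 0) :=
    ((continuous_sub_right _).tendsto' _ _ (sub_self _)).mono_left nhdsWithin_le_nhds
  filter_upwards [Ioo_mem_nhdsGT (lt_add_one (m : ℚ)),
    hto.eventually (eventually_jn_append_iff_jnAtZero hR hl (b + m))] with x hx hJN
  rw [isLspaceParam_iff_of_mem_Ioo hx, hJN]

theorem eventually_nhdsLT_isLspaceParam_iff (hR : ∀ r ∈ R, 0 < r) (hl : 3 ≤ R.length) (m : ℤ) :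
    ∀ᶠ x in 𝓝[<] (m : ℚ), (IsLspaceParam b R x ↔ ¬JNAtOne (b + m - 1) R) := by
  have hto : Tendsto (fun x : ℚ => x - ((m - 1 : ℤ) : ℚ)) (𝓝[<] (m : ℚ)) (𝓝 1) :=
    ((continuous_sub_right _).tendsto' _ _ (by push_cast; ring)).mono_left nhdsWithin_le_nhds
  filter_upwards [Ioo_mem_nhdsLT (sub_one_lt (m : ℚ)),
    hto.eventually (eventually_jn_append_iff_jnAtOne hR hl (b + m - 1))] with x hx hJN
  rw [isLspaceParam_iff_of_mem_Ioo (m := m - 1) (by push_cast; simpa using hx), ← add_sub_assoc,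
    hJN]

theorem eventually_nhds_isLspaceParam_iff {x₀ : ℚ} {m : ℤ} (hx₀ : x₀ ∈ Ioo (m : ℚ) (m + 1)) :
    ∀ᶠ x in 𝓝 x₀, (IsLspaceParam b R x ↔ ¬JN (b + m) (R ++ [x - m])) :=
  Filter.eventually_of_mem (isOpen_Ioo.mem_nhds hx₀) fun _ hx => isLspaceParam_iff_of_mem_Ioo hx

theorem eventually_nhdsNE_not_isLspaceParam (hR : ∀ r ∈ R, 0 < r ∧ r < 1) (hl : 3 ≤ R.length)
    {x₀ : ℚ} (h : ¬IsLspaceParam b R x₀) : ∀ᶠ x in 𝓝[≠] x₀, ¬IsLspaceParam b R x := by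
  rcases exists_intCast_or_mem_Ioo x₀ with ⟨m, rfl⟩ | hx₀
  · rw [isLspaceParam_intCast, not_not, jn_iff_jnAtZero_and_jnAtOne hl] at h
    rw [← nhdsLT_sup_nhdsGT, eventually_sup]
    exact ⟨(eventually_nhdsLT_isLspaceParam_iff (fun r hr => (hR r hr).1) hl m).mono
        fun x hx => hx.not.mpr (not_not.mpr h.2),
      (eventually_nhdsGT_isLspaceParam_iff (fun r hr => (hR r hr).2) hl m).mono
        fun x hx => hx.not.mpr (not_not.mpr h.1)⟩
  · rw [isLspaceParam_iff_of_mem_Ioo hx₀, not_not] at h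
    have hJN := (tendsto_id.sub tendsto_const_nhds).eventually (jn_append_eventually (by omega) h)
    refine Filter.Eventually.filter_mono nhdsWithin_le_nhds ?_
    filter_upwards [eventually_nhds_isLspaceParam_iff (b := b) (R := R) hx₀, hJN] with x hx hx'
    exact hx.not.mpr (not_not.mpr hx')

theorem eventually_nhdsGT_or_nhdsLT_isLspaceParam (hR : ∀ r ∈ R, 0 < r ∧ r < 1)
    (hl : 3 ≤ R.length) {x₀ : ℚ} (h : IsLspaceParam b R x₀) :
    (∀ᶠ x in 𝓝[>] x₀, IsLspaceParam b R x) ∨ ∀ᶠ x in 𝓝[<] x₀, IsLspaceParam b R x := by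
  rcases exists_intCast_or_mem_Ioo x₀ with ⟨m, rfl⟩ | hx₀
  · rw [isLspaceParam_intCast, jn_iff_jnAtZero_and_jnAtOne hl, not_and_or] at h
    rcases h with h | h
    · exact Or.inl ((eventually_nhdsGT_isLspaceParam_iff (fun r hr => (hR r hr).2) hl m).mono
        fun x hx => hx.mpr h)
    · exact Or.inr ((eventually_nhdsLT_isLspaceParam_iff (fun r hr => (hR r hr).1) hl m).mono
        fun x hx => hx.mpr h)
  · rw [isLspaceParam_iff_of_mem_Ioo hx₀] at h
    rcases jn_append_antitone_or_monotone (R := R) (by omega) (b + ⌊x₀⌋) with hmono | hmono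
    · refine Or.inl ?_
      filter_upwards [(eventually_nhds_isLspaceParam_iff (b := b) (R := R) hx₀).filter_mono
        nhdsWithin_le_nhds, self_mem_nhdsWithin] with x hx (hx' : x₀ < x)
      exact hx.mpr fun hJ => h (hmono (sub_le_sub_right hx'.le _) hJ)
    · refine Or.inr ?_
      filter_upwards [(eventually_nhds_isLspaceParam_iff (b := b) (R := R) hx₀).filter_mono
        nhdsWithin_le_nhds, self_mem_nhdsWithin] with x hx (hx' : x < x₀)
      exact hx.mpr fun hJ => h (hmono (sub_le_sub_right hx'.le _) hJ)

theorem isLspaceParam_intCast_of_lt (hl : 2 ≤ R.length) {m : ℤ}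
    (hm : b + m < -((R.length : ℤ) - 1)) : IsLspaceParam b R m := by
  rw [isLspaceParam_intCast, jn_iff_jnLow hl]
  rintro (h | ⟨h, _⟩ | ⟨h, _⟩) <;> omega

end IsLspaceParam

section Mobius

variable {t u v w : ℤ}

theorem mobius_eq_div_add_inv (hdet : t * w - u * v = 1) (ht : t ≠ 0) {n : ℤ} (hn : n * t + v ≠ 0) :
    ((n * u + w : ℤ) : ℚ) / ((n * t + v : ℤ) : ℚ) = u / t + ((t * (n * t + v) : ℤ) : ℚ)⁻¹ := by
  have hn' : ((n * t + v : ℤ) : ℚ) ≠ 0 := by exact_mod_cast hn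
  have ht' : (t : ℚ) ≠ 0 := by exact_mod_cast ht
  have hdet' : (t : ℚ) * w - u * v = 1 := by exact_mod_cast hdet
  push_cast at hn' ⊢
  field_simp
  linear_combination hdet'

theorem tendsto_mobius_atTop (hdet : t * w - u * v = 1) (ht : t ≠ 0) :
    Tendsto (fun n : ℤ => ((n * u + w : ℤ) : ℚ) / ((n * t + v : ℤ) : ℚ)) atTop
      (𝓝[>] ((u : ℚ) / t)) := by
  have hD : Tendsto (fun n : ℤ => t * (n * t + v)) atTop atTop := by
    refine tendsto_atTop_mono' _ ?_ (tendsto_atTop_add_const_right _ (t * v) tendsto_id)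
    filter_upwards [eventually_ge_atTop 0] with n hn
    have : 1 ≤ t * t := by nlinarith [Int.one_le_abs ht, abs_mul_abs_self t]
    rw [id]
    nlinarith
  have hinv := tendsto_inv_atTop_nhdsGT_zero.comp (tendsto_intCast_atTop_iff (R := ℚ).mpr hD)
  refine Tendsto.congr' ((hD.eventually_ne_atTop 0).mono fun n hn =>
    (mobius_eq_div_add_inv hdet ht (right_ne_zero_of_mul hn)).symm) ?_
  rw [tendsto_nhdsWithin_iff] at hinv ⊢
  exact ⟨by simpa using hinv.1.const_add ((u : ℚ) / t), hinv.2.mono fun n hn => by simpa using hn⟩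

theorem tendsto_mobius_atBot (hdet : t * w - u * v = 1) (ht : t ≠ 0) :
    Tendsto (fun n : ℤ => ((n * u + w : ℤ) : ℚ) / ((n * t + v : ℤ) : ℚ)) atBot
      (𝓝[<] ((u : ℚ) / t)) := by
  have hD : Tendsto (fun n : ℤ => t * (n * t + v)) atBot atBot := by
    refine tendsto_atBot_mono' _ ?_ (tendsto_atBot_add_const_right _ (t * v) tendsto_id)
    filter_upwards [eventually_le_atBot 0] with n hn
    have : 1 ≤ t * t := by nlinarith [Int.one_le_abs ht, abs_mul_abs_self t]
    rw [id]
    nlinarith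
  have hinv := tendsto_inv_atBot_nhdsLT_zero.comp (tendsto_intCast_atBot_iff (R := ℚ).mpr hD)
  refine Tendsto.congr' ((hD.eventually_ne_atBot 0).mono fun n hn =>
    (mobius_eq_div_add_inv hdet ht (right_ne_zero_of_mul hn)).symm) ?_
  rw [tendsto_nhdsWithin_iff] at hinv ⊢
  exact ⟨by simpa using hinv.1.const_add ((u : ℚ) / t), hinv.2.mono fun n hn => by simpa using hn⟩

theorem eventually_cofinite_mul_add_ne_zero (ht : t ≠ 0) : ∀ᶠ n in cofinite, n * t + v ≠ 0 :=
  eventually_cofinite.mpr <| Subsingleton.finite fun m hm n hn =>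
    mul_right_cancel₀ ht (by simp only [mem_ofPred_eq, not_not] at hm hn; linarith)

end Mobius

/-- Proposition 5.2 of the paper, expressed arithmetically: for `s ≥ 4`, the family
`Y_n = S²(b; r_1, …, r_{s−1}, (nu+w)/(nt+v))` (with `tw − uv = 1` and `0 ≤ w < v`)
contains infinitely many L-spaces if and only if either `t = 0` or the limit
`Y_∞ = S²(b; r_1, …, r_{s−1}, u/t)` is an L-space. -/
theorem Lspace_family_infinite_iff_limit (s : ℕ) (hs : 4 ≤ s) (b : ℤ) (R : List ℚ)
    (hlen : R.length = s - 1) (hR : ∀ r ∈ R, 0 < r ∧ r < 1)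
    (t u v w : ℤ) (hdet : t * w - u * v = 1) (hw0 : 0 ≤ w) (hwv : w < v) :
    {n : ℤ | n * t + v ≠ 0 ∧
        IsLspaceParam b R (((n * u + w : ℤ) : ℚ) / ((n * t + v : ℤ) : ℚ))}.Infinite ↔
      (t = 0 ∨ IsLspaceParam b R ((u : ℚ) / (t : ℚ))) := by
  have hl : 3 ≤ R.length := by omega
  rcases eq_or_ne t 0 with rfl | ht
  · -- `u * v = -1` and `0 ≤ w < v` force `Y_n = S²(b; R, -n)`
    obtain ⟨rfl, rfl⟩ : u = -1 ∧ v = 1 := by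
      rcases Int.eq_one_or_neg_one_of_mul_eq_neg_one' (show u * v = -1 by linarith) with h | h <;>
        omega
    obtain rfl : w = 0 := by omega
    refine iff_of_true ((Ioi_infinite (b + R.length)).mono fun n hn => ⟨by simp, ?_⟩) (Or.inl rfl)
    rw [show ((n * -1 + 0 : ℤ) : ℚ) / ((n * 0 + 1 : ℤ) : ℚ) = ((-n : ℤ) : ℚ) by push_cast; ring]
    exact isLspaceParam_intCast_of_lt (by omega) (by rw [mem_Ioi] at hn; omega)
  rw [or_iff_right ht, ← frequently_cofinite_iff_infinite]
  constructor
  · intro hfreq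
    by_contra hL
    have hto := (tendsto_mobius_atBot hdet ht).sup_sup (tendsto_mobius_atTop hdet ht)
    rw [← Int.cofinite_eq, nhdsLT_sup_nhdsGT] at hto
    exact hfreq ((hto.eventually (eventually_nhdsNE_not_isLspaceParam hR hl hL)).mono
      fun n hn h => hn h.2)
  · intro hL
    have hne : ∀ᶠ n in cofinite, n * t + v ≠ 0 := eventually_cofinite_mul_add_ne_zero ht
    rcases eventually_nhdsGT_or_nhdsLT_isLspaceParam hR hl hL with h | h
    · exact ((hne.filter_mono atTop_le_cofinite).and ((tendsto_mobius_atTop hdet ht).eventually h)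
        ).frequently.filter_mono atTop_le_cofinite
    · exact ((hne.filter_mono atBot_le_cofinite).and ((tendsto_mobius_atBot hdet ht).eventually h)
        ).frequently.filter_mono atBot_le_cofinite
end
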